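/- Fix ν ≥ 0. For all a, b ∈ [0,1] and all s ∈ [0,1], h_a(h_b(s)) = h_{ab}(s), where h is extended by h_a(1) = 1. -/
import Mathlib


open Filter Finset

/-- The linear fractional generating function `h_a(s)` (with parameter ν). -/
noncomputable def h (ν a s : ℝ) : ℝ :=
  if s = 1 then 1 else 1 - a * (1/(1-s) + ν/2 * (1-a))⁻¹

theorem stmt6 (ν : ℝ) (hν : 0 ≤ ν) (a b : ℝ)
    (ha : a ∈ Set.Icc (0 : ℝ) 1) (hb : b ∈ Set.Icc (0 : ℝ) 1)
    (s : ℝ) (hs : s ∈ Set.Icc (0 : ℝ) 1) :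
    h ν a (h ν b s) = h ν (a * b) s := by
  obtain ⟨ha0, ha1⟩ := ha
  obtain ⟨hb0, hb1⟩ := hb
  obtain ⟨hs0, hs1⟩ := hs
  by_cases hse : s = 1
  · simp [h, hse]
  · have h1s : 0 < 1 - s := by
      rcases lt_or_eq_of_le hs1 with h | h
      · linarith
      · exact absurd h hse
    have hDb : 0 < 1/(1-s) + ν/2 * (1-b) := by
      have : 0 < 1/(1-s) := by positivity
      nlinarith
    by_cases hbz : b = 0
    · simp [h, hbz, hse]
    · have hbpos : 0 < b := lt_of_le_of_ne hb0 (Ne.symm hbz)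
      have ht : h ν b s = 1 - b * (1/(1-s) + ν/2 * (1-b))⁻¹ := by
        simp [h, hse]
      have htne : h ν b s ≠ 1 := by
        rw [ht]
        have : 0 < b * (1/(1-s) + ν/2 * (1-b))⁻¹ := by positivity
        linarith
      rw [h, if_neg htne, ht, h, if_neg hse]
      have h1t : (1 : ℝ) - (1 - b * (1/(1-s) + ν/2 * (1-b))⁻¹) =
          b * (1/(1-s) + ν/2 * (1-b))⁻¹ := by ring
      rw [h1t]
      have hab1 : a * b ≤ 1 := mul_le_one₀ ha1 hb0 hb1
      have hDab : 0 < 1/(1-s) + ν/2 * (1-a*b) := by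
        have : 0 < 1/(1-s) := by positivity
        nlinarith
      have key : 1 / (b * (1/(1-s) + ν/2 * (1-b))⁻¹) + ν/2 * (1-a)
          = (1/(1-s) + ν/2 * (1-a*b)) / b := by
        field_simp
        ring
      rw [key, inv_div]
      ring
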